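/- arXiv:2111.12653 — 2 statements merged into one kernel-verified Lean document; each statement's English description precedes it below -/
import Mathlib

section
/- A triple (R1, R2, R3) of complex numbers is triangular (i.e. there exist complex numbers r1, r2, r3 with ri² = Ri and r1 + r2 + r3 = 0) if and only if R1² + R2² + R3² = 2(R1R2 + R1R3 + R2R3). -/
/-- A triple of complex numbers is triangular iff the symmetric polynomial
condition `R1² + R2² + R3² = 2(R1R2 + R1R3 + R2R3)` holds. -/
theorem stmt_1 (R1 R2 R3 : ℂ) :
    (∃ r1 r2 r3 : ℂ, r1 ^ 2 = R1 ∧ r2 ^ 2 = R2 ∧ r3 ^ 2 = R3 ∧ r1 + r2 + r3 = 0) ↔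
      R1 ^ 2 + R2 ^ 2 + R3 ^ 2 = 2 * (R1 * R2 + R1 * R3 + R2 * R3) := by
  constructor
  · rintro ⟨a, b, c, rfl, rfl, rfl, h⟩
    have hc : c = -(a + b) := by linear_combination h
    subst hc; ring
  · intro h
    obtain ⟨a, rfl⟩ := IsAlgClosed.exists_pow_nat_eq R1 (n := 2) two_pos
    obtain ⟨b, rfl⟩ := IsAlgClosed.exists_pow_nat_eq R2 (n := 2) two_pos
    obtain ⟨c, rfl⟩ := IsAlgClosed.exists_pow_nat_eq R3 (n := 2) two_pos
    have key : (a + b + c) * (a + b - c) * ((a - b + c) * (a - b - c)) = 0 := by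
      linear_combination h
    rcases mul_eq_zero.mp key with h1 | h2
    · rcases mul_eq_zero.mp h1 with h1 | h1
      · exact ⟨a, b, c, rfl, rfl, rfl, h1⟩
      · exact ⟨a, b, -c, rfl, rfl, by ring, by linear_combination h1⟩
    · rcases mul_eq_zero.mp h2 with h2 | h2
      · exact ⟨a, -b, c, rfl, by ring, rfl, by linear_combination h2⟩
      · exact ⟨a, -b, -c, rfl, by ring,
          by ring, by linear_combination h2⟩
end

section
/- Let a, b be distinct complex numbers, both different from 0 and from 1. Then the triple (R1, R2, R3) with R1 = 1/((1−a)²(1−b)²), R2 = a/((1−a)²(a−b)²), R3 = b/((1−b)²(a−b)²) is not triangular: there do not exist complex square roots r1, r2, r3 of R1, R2, R3 with r1 + r2 + r3 = 0. -/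
/-!
Squaring `r₁ + r₂ + r₃ = 0` twice eliminates the choice of square roots: the triple is triangular
only if `R₁² + R₂² + R₃² - 2(R₁R₂ + R₂R₃ + R₃R₁)` vanishes. For the three residues this
expression equals `1 / ((1 - a)² (1 - b)² (a - b)²)`, which is never zero.
-/

/-- Vanishes exactly when `R₁, R₂, R₃` are triangular (over an algebraically closed field). -/
def triangularDiscriminant {R : Type*} [CommRing R] (R₁ R₂ R₃ : R) : R :=
  R₁ ^ 2 + R₂ ^ 2 + R₃ ^ 2 - 2 * (R₁ * R₂ + R₂ * R₃ + R₃ * R₁)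

/-- Heron's identity. -/
theorem triangularDiscriminant_sq {R : Type*} [CommRing R] (r₁ r₂ r₃ : R) :
    triangularDiscriminant (r₁ ^ 2) (r₂ ^ 2) (r₃ ^ 2) =
      -((r₁ + r₂ + r₃) * (-r₁ + r₂ + r₃) * (r₁ - r₂ + r₃) * (r₁ + r₂ - r₃)) := by
  unfold triangularDiscriminant
  ring

theorem triangularDiscriminant_sq_eq_zero {R : Type*} [CommRing R] {r₁ r₂ r₃ : R}
    (h : r₁ + r₂ + r₃ = 0) : triangularDiscriminant (r₁ ^ 2) (r₂ ^ 2) (r₃ ^ 2) = 0 := by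
  simp [triangularDiscriminant_sq, h]

theorem triangularDiscriminant_residues {K : Type*} [Field K] {a b : K} (hab : a ≠ b)
    (ha1 : a ≠ 1) (hb1 : b ≠ 1) :
    triangularDiscriminant (1 / ((1 - a) ^ 2 * (1 - b) ^ 2)) (a / ((1 - a) ^ 2 * (a - b) ^ 2))
        (b / ((1 - b) ^ 2 * (a - b) ^ 2)) =
      1 / ((1 - a) ^ 2 * (1 - b) ^ 2 * (a - b) ^ 2) := by
  have ha : 1 - a ≠ 0 := sub_ne_zero.mpr ha1.symm
  have hb : 1 - b ≠ 0 := sub_ne_zero.mpr hb1.symm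
  have hab' : a - b ≠ 0 := sub_ne_zero.mpr hab
  unfold triangularDiscriminant
  field_simp
  ring

theorem stmt_5_general (a b : ℂ) (hab : a ≠ b) (ha1 : a ≠ 1) (hb1 : b ≠ 1) :
    ¬ ∃ r1 r2 r3 : ℂ,
        r1 ^ 2 = 1 / ((1 - a) ^ 2 * (1 - b) ^ 2) ∧
        r2 ^ 2 = a / ((1 - a) ^ 2 * (a - b) ^ 2) ∧
        r3 ^ 2 = b / ((1 - b) ^ 2 * (a - b) ^ 2) ∧
        r1 + r2 + r3 = 0 := by
  rintro ⟨r1, r2, r3, h1, h2, h3, hsum⟩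
  have hdisc := triangularDiscriminant_sq_eq_zero hsum
  rw [h1, h2, h3, triangularDiscriminant_residues hab ha1 hb1] at hdisc
  have hden : (1 - a) ^ 2 * (1 - b) ^ 2 * (a - b) ^ 2 ≠ 0 := by
    simp [sub_ne_zero, ha1.symm, hb1.symm, hab]
  exact one_div_ne_zero hden hdisc

/-- The quadratic residues of `z (dz)²/((z−1)²(z−a)²(z−b)²)` are never triangular. -/
theorem stmt_5 (a b : ℂ) (hab : a ≠ b) (ha0 : a ≠ 0) (ha1 : a ≠ 1)
    (hb0 : b ≠ 0) (hb1 : b ≠ 1) :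
    ¬ ∃ r1 r2 r3 : ℂ,
        r1 ^ 2 = 1 / ((1 - a) ^ 2 * (1 - b) ^ 2) ∧
        r2 ^ 2 = a / ((1 - a) ^ 2 * (a - b) ^ 2) ∧
        r3 ^ 2 = b / ((1 - b) ^ 2 * (a - b) ^ 2) ∧
        r1 + r2 + r3 = 0 :=
  stmt_5_general a b hab ha1 hb1
end
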